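/- arXiv:1803.09610 — 2 statements merged into one kernel-verified Lean document; each statement's English description precedes it below -/
import Mathlib

section
/- The real vector space of smooth functions y : ℝ³ → ℝ satisfying the two partial differential equations ∂₃∂₃y(x) = x₂·∂₁∂₁y(x) and ∂₂∂₂y(x) = 0 for all x ∈ ℝ³ is finite-dimensional, of dimension 12 over ℝ. -/
/-- Partial derivative with respect to the `i`-th coordinate of `ℝⁿ`. -/
noncomputable def pd {n : ℕ} (i : Fin n) (f : (Fin n → ℝ) → ℝ) : (Fin n → ℝ) → ℝ :=
  fun x => fderiv ℝ f x (Pi.single i 1)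

/-- Membership in the solution space of the system
`∂₃∂₃y = x₂·∂₁∂₁y`, `∂₂∂₂y = 0` of smooth functions on `ℝ³`
(coordinates `x 0, x 1, x 2`, so `x₂ = x 1`, `∂₁ = pd 0`, `∂₂ = pd 1`, `∂₃ = pd 2`). -/
def IsSol (y : (Fin 3 → ℝ) → ℝ) : Prop :=
  ContDiff ℝ (⊤ : ℕ∞) y ∧
  (∀ x, pd 2 (pd 2 y) x = x 1 * pd 0 (pd 0 y) x) ∧
  (∀ x, pd 1 (pd 1 y) x = 0)

lemma pd_curve {n : ℕ} {y : (Fin n → ℝ) → ℝ} {x : Fin n → ℝ} {i : Fin n} {s : ℝ}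
    (hy : DifferentiableAt ℝ y (Function.update x i s)) :
    HasDerivAt (fun t => y (Function.update x i t)) (pd i y (Function.update x i s)) s :=
  hy.hasFDerivAt.comp_hasDerivAt s (hasDerivAt_update x i s)

lemma pd_unique {n : ℕ} {y : (Fin n → ℝ) → ℝ} {x : Fin n → ℝ} {i : Fin n} {m : ℝ}
    (hy : DifferentiableAt ℝ y x)
    (h : HasDerivAt (fun t => y (Function.update x i t)) m (x i)) : pd i y x = m := by
  have h2 := pd_curve (y := y) (x := x) (i := i) (s := x i) (by rwa [Function.update_eq_self])
  rw [Function.update_eq_self] at h2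
  exact h2.unique h

lemma contDiff_pd {n : ℕ} (i : Fin n) {y : (Fin n → ℝ) → ℝ} (hy : ContDiff ℝ (⊤:ℕ∞) y) :
    ContDiff ℝ (⊤:ℕ∞) (pd i y) :=
  (hy.fderiv_right (m := (⊤:ℕ∞)) (by exact_mod_cast le_top)).clm_apply contDiff_const

lemma diff_of_cd {n : ℕ} {y : (Fin n → ℝ) → ℝ} (hy : ContDiff ℝ (⊤:ℕ∞) y) :
    Differentiable ℝ y := hy.differentiable (by norm_cast)

lemma pd_comm {n : ℕ} {y : (Fin n → ℝ) → ℝ} (hy : ContDiff ℝ (⊤:ℕ∞) y) (i j : Fin n)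
    (x : Fin n → ℝ) : pd i (pd j y) x = pd j (pd i y) x := by
  have hd : Differentiable ℝ (fderiv ℝ y) :=
    (hy.fderiv_right (m := (⊤:ℕ∞)) (by exact_mod_cast le_top)).differentiable (by norm_cast)
  have hsym := second_derivative_symmetric
    (f := y) (f' := fderiv ℝ y) (f'' := fderiv ℝ (fderiv ℝ y) x)
    (fun z => (diff_of_cd hy z).hasFDerivAt) (hd x).hasFDerivAt
  have key : ∀ k l : Fin n, pd k (pd l y) x
      = fderiv ℝ (fderiv ℝ y) x (Pi.single k 1) (Pi.single l 1) := by
    intro k l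
    show fderiv ℝ (fun z => fderiv ℝ y z (Pi.single l 1)) x (Pi.single k 1) = _
    rw [fderiv_clm_apply (hd x) (differentiableAt_const _)]
    simp
  rw [key, key, hsym]

lemma pdc {n : ℕ} {y : (Fin n → ℝ) → ℝ} (hy : ContDiff ℝ (⊤:ℕ∞) y) (i j : Fin n) :
    pd i (pd j y) = pd j (pd i y) := funext (pd_comm hy i j)

lemma pd_zero_fn {n : ℕ} (i : Fin n) : pd i (fun _ => (0:ℝ)) = fun _ => 0 := by
  funext x
  exact pd_unique (differentiableAt_const _) (hasDerivAt_const _ _)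

lemma pd_add {n : ℕ} {f g : (Fin n → ℝ) → ℝ} {x : Fin n → ℝ} (i : Fin n)
    (hf : DifferentiableAt ℝ f x) (hg : DifferentiableAt ℝ g x) :
    pd i (fun z => f z + g z) x = pd i f x + pd i g x := by
  show fderiv ℝ (fun z => f z + g z) x _ = _
  rw [fderiv_fun_add hf hg]; rfl

lemma pd_mul {n : ℕ} {f g : (Fin n → ℝ) → ℝ} {x : Fin n → ℝ} (i : Fin n)
    (hf : DifferentiableAt ℝ f x) (hg : DifferentiableAt ℝ g x) :
    pd i (fun z => f z * g z) x = pd i f x * g x + f x * pd i g x := by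
  show fderiv ℝ (fun z => f z * g z) x _ = _
  rw [fderiv_fun_mul hf hg]
  simp only [ContinuousLinearMap.add_apply, ContinuousLinearMap.smul_apply, smul_eq_mul]
  rw [show (fderiv ℝ g x) (Pi.single i 1) = pd i g x from rfl,
    show (fderiv ℝ f x) (Pi.single i 1) = pd i f x from rfl]
  ring

lemma pd_coord {n : ℕ} (i j : Fin n) (x : Fin n → ℝ) :
    pd i (fun z => z j) x = if j = i then 1 else 0 := by
  show fderiv ℝ (⇑(ContinuousLinearMap.proj (R := ℝ) (φ := fun _ : Fin n => ℝ) j)) x _ = _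
  rw [ContinuousLinearMap.fderiv]
  simp [Pi.single_apply]

-- 1D lemmas
lemma oneD_affine {h h' : ℝ → ℝ} (hd : ∀ t, HasDerivAt h (h' t) t)
    (hd' : ∀ t, HasDerivAt h' 0 t) : ∀ t, h t = h 0 + t * h' 0 := by
  intro t
  have hc : ∀ s, h' s = h' 0 :=
    fun s => is_const_of_deriv_eq_zero (fun z => (hd' z).differentiableAt)
      (fun z => (hd' z).deriv) s 0
  have hk : ∀ s, HasDerivAt (fun t => h t - t * h' 0) 0 s := by
    intro s
    have := (hd s).fun_sub ((hasDerivAt_id s).mul_const (h' 0))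
    simpa [hc s] using this
  have := is_const_of_deriv_eq_zero (fun z => (hk z).differentiableAt)
    (fun z => (hk z).deriv) t 0
  simp only [zero_mul, sub_zero] at this
  linarith [this]

lemma oneD_cubic {h h' : ℝ → ℝ} {A B : ℝ} (hd : ∀ t, HasDerivAt h (h' t) t)
    (hd' : ∀ t, HasDerivAt h' (A + B * t) t) :
    ∀ t, h t = h 0 + t * h' 0 + A * t ^ 2 / 2 + B * t ^ 3 / 6 := by
  have hk : ∀ t, HasDerivAt (fun s => h s - A * s ^ 2 / 2 - B * s ^ 3 / 6)
      (h' t - A * t - B * t ^ 2 / 2) t := by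
    intro t
    have h2 := (hasDerivAt_pow 2 t).const_mul A
    have h3 := (hasDerivAt_pow 3 t).const_mul B
    have := ((hd t).fun_sub (h2.div_const 2)).fun_sub (h3.div_const 6)
    refine this.congr_deriv ?_
    push_cast; ring
  have hk' : ∀ t, HasDerivAt (fun t => h' t - A * t - B * t ^ 2 / 2) 0 t := by
    intro t
    have h1 := (hasDerivAt_id t).const_mul A
    have h2 := (hasDerivAt_pow 2 t).const_mul B
    have := ((hd' t).fun_sub h1).fun_sub (h2.div_const 2)
    refine this.congr_deriv ?_
    push_cast; ring
  intro t
  have := oneD_affine hk hk' t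
  nlinarith [this]

-- coordinate-killing projections
noncomputable def klm (k : Fin 3) : (Fin 3 → ℝ) →L[ℝ] (Fin 3 → ℝ) :=
  ContinuousLinearMap.pi (fun j => if j = k then 0 else ContinuousLinearMap.proj j)

def kil (k : Fin 3) (x : Fin 3 → ℝ) : Fin 3 → ℝ := Function.update x k 0

lemma klm_apply (k : Fin 3) (x : Fin 3 → ℝ) (j : Fin 3) :
    klm k x j = if j = k then 0 else x j := by
  simp only [klm, ContinuousLinearMap.pi_apply]
  by_cases h : j = k <;> simp [h]

lemma kil_eq_klm (k : Fin 3) : kil k = ⇑(klm k) := by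
  funext x j
  rw [klm_apply]
  by_cases h : j = k
  · subst h; simp [kil]
  · simp [kil, Function.update_of_ne h, h]

lemma contDiff_comp_kil {y : (Fin 3 → ℝ) → ℝ} (hy : ContDiff ℝ (⊤:ℕ∞) y) (k : Fin 3) :
    ContDiff ℝ (⊤:ℕ∞) (fun x => y (kil k x)) := by
  rw [kil_eq_klm]
  exact hy.comp (klm k).contDiff

lemma klm_single_ne (k j : Fin 3) (h : j ≠ k) :
    klm k (Pi.single j 1) = Pi.single j 1 := by
  funext j'
  rw [klm_apply]
  by_cases h' : j' = k
  · subst h'; simp [Pi.single_apply, Ne.symm h]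
  · simp [h']

lemma klm_single_eq (k : Fin 3) : klm k (Pi.single k 1) = 0 := by
  funext j'
  rw [klm_apply]
  by_cases h' : j' = k
  · simp [h']
  · simp [h', Pi.single_apply]

lemma pd_comp_kil_ne {y : (Fin 3 → ℝ) → ℝ} (hy : Differentiable ℝ y) {k j : Fin 3}
    (h : j ≠ k) (x : Fin 3 → ℝ) : pd j (fun z => y (kil k z)) x = pd j y (kil k x) := by
  have hc : (fun z => y (kil k z)) = y ∘ ⇑(klm k) := by rw [kil_eq_klm]; rfl
  show fderiv ℝ (fun z => y (kil k z)) x _ = _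
  rw [hc, fderiv_comp x (hy _) (klm k).differentiableAt,
    (klm k).fderiv]
  show fderiv ℝ y (klm k x) (klm k (Pi.single j 1)) = _
  rw [klm_single_ne k j h, kil_eq_klm]
  rfl

lemma pd_comp_kil_eq {y : (Fin 3 → ℝ) → ℝ} (hy : Differentiable ℝ y) (k : Fin 3)
    (x : Fin 3 → ℝ) : pd k (fun z => y (kil k z)) x = 0 := by
  have hc : (fun z => y (kil k z)) = y ∘ ⇑(klm k) := by rw [kil_eq_klm]; rfl
  show fderiv ℝ (fun z => y (kil k z)) x _ = _
  rw [hc, fderiv_comp x (hy _) (klm k).differentiableAt,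
    (klm k).fderiv]
  show fderiv ℝ y (klm k x) (klm k (Pi.single k 1)) = _
  rw [klm_single_eq]
  simp

-- dependence on a single coordinate
def DepOn (f : (Fin 3 → ℝ) → ℝ) (i : Fin 3) : Prop :=
  ∀ x x' : Fin 3 → ℝ, x i = x' i → f x = f x'

lemma depOn_pd_ne_zero {f : (Fin 3 → ℝ) → ℝ} (hf : Differentiable ℝ f) {i j : Fin 3}
    (hdep : DepOn f i) (h : j ≠ i) (x : Fin 3 → ℝ) : pd j f x = 0 := by
  refine pd_unique (hf x) ?_
  have he : (fun t => f (Function.update x j t)) = fun _ => f x := by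
    funext t
    exact hdep _ _ (by rw [Function.update_of_ne (Ne.symm h)])
  rw [he]
  exact hasDerivAt_const _ _

lemma depOn_pd {f : (Fin 3 → ℝ) → ℝ} (hf : Differentiable ℝ f) {i : Fin 3}
    (hdep : DepOn f i) : DepOn (pd i f) i := by
  intro x x' hxx
  refine pd_unique (hf x) ?_
  have he : (fun t => f (Function.update x i t)) = fun t => f (Function.update x' i t) := by
    funext t
    exact hdep _ _ (by simp)
  rw [he, hxx]
  have h2 := pd_curve (y := f) (x := x') (i := i) (s := x' i)
    (by rw [Function.update_eq_self]; exact (hf x'))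
  rwa [Function.update_eq_self] at h2

-- structure lemmas
lemma pd_affine_struct {y : (Fin 3 → ℝ) → ℝ} (hy : ContDiff ℝ (⊤:ℕ∞) y) (i : Fin 3)
    (h2 : ∀ x, pd i (pd i y) x = 0) (x : Fin 3 → ℝ) :
    y x = y (kil i x) + x i * pd i y (kil i x) := by
  have hdy := diff_of_cd hy
  have hdy' := diff_of_cd (contDiff_pd i hy)
  have hd : ∀ t, HasDerivAt (fun t => y (Function.update x i t))
      (pd i y (Function.update x i t)) t := fun t => pd_curve (hdy _)
  have hd' : ∀ t, HasDerivAt (fun t => pd i y (Function.update x i t)) 0 t := by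
    intro t
    have := pd_curve (y := pd i y) (x := x) (i := i) (s := t) (hdy' _)
    rwa [h2] at this
  have := oneD_affine hd hd' (x i)
  rw [Function.update_eq_self] at this
  exact this

lemma pd_cubic_struct {y : (Fin 3 → ℝ) → ℝ} (hy : ContDiff ℝ (⊤:ℕ∞) y) (i : Fin 3)
    (A B : ℝ) (h2 : ∀ x, pd i (pd i y) x = A + B * x i) (x : Fin 3 → ℝ) :
    y x = y (kil i x) + x i * pd i y (kil i x) + A * x i ^ 2 / 2 + B * x i ^ 3 / 6 := by
  have hdy := diff_of_cd hy
  have hdy' := diff_of_cd (contDiff_pd i hy)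
  have hd : ∀ t, HasDerivAt (fun t => y (Function.update x i t))
      (pd i y (Function.update x i t)) t := fun t => pd_curve (hdy _)
  have hd' : ∀ t, HasDerivAt (fun t => pd i y (Function.update x i t)) (A + B * t) t := by
    intro t
    have := pd_curve (y := pd i y) (x := x) (i := i) (s := t) (hdy' _)
    rw [h2] at this
    simpa using this
  have := oneD_cubic hd hd' (x i)
  rw [Function.update_eq_self] at this
  exact this

lemma hasDerivAt_cubic (c0 c1 c2 c3 s : ℝ) :
    HasDerivAt (fun t => c0 + c1 * t + c2 * t ^ 2 + c3 * t ^ 3)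
      (c1 + 2 * c2 * s + 3 * c3 * s ^ 2) s := by
  have h1 : HasDerivAt (fun t : ℝ => t) 1 s := hasDerivAt_id s
  have h2 := hasDerivAt_pow 2 s
  have h3 := hasDerivAt_pow 3 s
  have := (((h1.const_mul c1).const_add c0).fun_add (h2.const_mul c2)).fun_add (h3.const_mul c3)
  refine this.congr_deriv ?_
  push_cast; ring

lemma pd_poly (i : Fin 3) {f : (Fin 3 → ℝ) → ℝ} (hf : Differentiable ℝ f)
    (c0 c1 c2 c3 : (Fin 3 → ℝ) → ℝ)
    (h : ∀ x t, f (Function.update x i t) = c0 x + c1 x * t + c2 x * t ^ 2 + c3 x * t ^ 3) :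
    ∀ x, pd i f x = c1 x + 2 * c2 x * x i + 3 * c3 x * x i ^ 2 := by
  intro x
  refine pd_unique (hf x) ?_
  have he : (fun t => f (Function.update x i t))
      = fun t => c0 x + c1 x * t + c2 x * t ^ 2 + c3 x * t ^ 3 := funext (h x)
  rw [he]
  exact hasDerivAt_cubic _ _ _ _ _


lemma d0i0 : pd 0 (fun x : Fin 3 → ℝ => (1:ℝ)) = fun x : Fin 3 → ℝ => (0 : ℝ) := by
  funext x
  rw [pd_poly 0 (by fun_prop) (fun x => (1:ℝ)) (fun x => (0:ℝ)) (fun x => (0:ℝ)) (fun x => (0:ℝ)) (fun x t => by simp [Function.update_apply]; try ring)]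
  ring

lemma dd0i0 : pd 0 (fun x : Fin 3 → ℝ => (0 : ℝ)) = fun x : Fin 3 → ℝ => (0 : ℝ) := by
  funext x
  rw [pd_poly 0 (by fun_prop) (fun x => (0:ℝ)) (fun x => (0:ℝ)) (fun x => (0:ℝ)) (fun x => (0:ℝ)) (fun x t => by simp [Function.update_apply]; try ring)]
  ring

lemma d0i1 : pd 1 (fun x : Fin 3 → ℝ => (1:ℝ)) = fun x : Fin 3 → ℝ => (0 : ℝ) := by
  funext x
  rw [pd_poly 1 (by fun_prop) (fun x => (1:ℝ)) (fun x => (0:ℝ)) (fun x => (0:ℝ)) (fun x => (0:ℝ)) (fun x t => by simp [Function.update_apply]; try ring)]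
  ring

lemma dd0i1 : pd 1 (fun x : Fin 3 → ℝ => (0 : ℝ)) = fun x : Fin 3 → ℝ => (0 : ℝ) := by
  funext x
  rw [pd_poly 1 (by fun_prop) (fun x => (0:ℝ)) (fun x => (0:ℝ)) (fun x => (0:ℝ)) (fun x => (0:ℝ)) (fun x t => by simp [Function.update_apply]; try ring)]
  ring

lemma d0i2 : pd 2 (fun x : Fin 3 → ℝ => (1:ℝ)) = fun x : Fin 3 → ℝ => (0 : ℝ) := by
  funext x
  rw [pd_poly 2 (by fun_prop) (fun x => (1:ℝ)) (fun x => (0:ℝ)) (fun x => (0:ℝ)) (fun x => (0:ℝ)) (fun x t => by simp [Function.update_apply]; try ring)]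
  ring

lemma dd0i2 : pd 2 (fun x : Fin 3 → ℝ => (0 : ℝ)) = fun x : Fin 3 → ℝ => (0 : ℝ) := by
  funext x
  rw [pd_poly 2 (by fun_prop) (fun x => (0:ℝ)) (fun x => (0:ℝ)) (fun x => (0:ℝ)) (fun x => (0:ℝ)) (fun x t => by simp [Function.update_apply]; try ring)]
  ring

lemma sol0 : IsSol (fun x : Fin 3 → ℝ => (1:ℝ)) := by
  refine ⟨by fun_prop, fun x => ?_, fun x => ?_⟩
  · rw [d0i2, dd0i2, d0i0, dd0i0]; ring
  · rw [d0i1, dd0i1]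

lemma d1i0 : pd 0 (fun x : Fin 3 → ℝ => x 0) = fun x : Fin 3 → ℝ => (1 : ℝ) := by
  funext x
  rw [pd_poly 0 (by fun_prop) (fun x => (0:ℝ)) (fun x => (1:ℝ)) (fun x => (0:ℝ)) (fun x => (0:ℝ)) (fun x t => by simp [Function.update_apply]; try ring)]
  ring

lemma dd1i0 : pd 0 (fun x : Fin 3 → ℝ => (1 : ℝ)) = fun x : Fin 3 → ℝ => (0 : ℝ) := by
  funext x
  rw [pd_poly 0 (by fun_prop) (fun x => (1:ℝ)) (fun x => (0:ℝ)) (fun x => (0:ℝ)) (fun x => (0:ℝ)) (fun x t => by simp [Function.update_apply]; try ring)]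
  ring

lemma d1i1 : pd 1 (fun x : Fin 3 → ℝ => x 0) = fun x : Fin 3 → ℝ => (0 : ℝ) := by
  funext x
  rw [pd_poly 1 (by fun_prop) (fun x => (x 0:ℝ)) (fun x => (0:ℝ)) (fun x => (0:ℝ)) (fun x => (0:ℝ)) (fun x t => by simp [Function.update_apply]; try ring)]
  ring

lemma dd1i1 : pd 1 (fun x : Fin 3 → ℝ => (0 : ℝ)) = fun x : Fin 3 → ℝ => (0 : ℝ) := by
  funext x
  rw [pd_poly 1 (by fun_prop) (fun x => (0:ℝ)) (fun x => (0:ℝ)) (fun x => (0:ℝ)) (fun x => (0:ℝ)) (fun x t => by simp [Function.update_apply]; try ring)]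
  ring

lemma d1i2 : pd 2 (fun x : Fin 3 → ℝ => x 0) = fun x : Fin 3 → ℝ => (0 : ℝ) := by
  funext x
  rw [pd_poly 2 (by fun_prop) (fun x => (x 0:ℝ)) (fun x => (0:ℝ)) (fun x => (0:ℝ)) (fun x => (0:ℝ)) (fun x t => by simp [Function.update_apply]; try ring)]
  ring

lemma dd1i2 : pd 2 (fun x : Fin 3 → ℝ => (0 : ℝ)) = fun x : Fin 3 → ℝ => (0 : ℝ) := by
  funext x
  rw [pd_poly 2 (by fun_prop) (fun x => (0:ℝ)) (fun x => (0:ℝ)) (fun x => (0:ℝ)) (fun x => (0:ℝ)) (fun x t => by simp [Function.update_apply]; try ring)]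
  ring

lemma sol1 : IsSol (fun x : Fin 3 → ℝ => x 0) := by
  refine ⟨by fun_prop, fun x => ?_, fun x => ?_⟩
  · rw [d1i2, dd1i2, d1i0, dd1i0]; ring
  · rw [d1i1, dd1i1]

lemma d2i0 : pd 0 (fun x : Fin 3 → ℝ => x 2) = fun x : Fin 3 → ℝ => (0 : ℝ) := by
  funext x
  rw [pd_poly 0 (by fun_prop) (fun x => (x 2:ℝ)) (fun x => (0:ℝ)) (fun x => (0:ℝ)) (fun x => (0:ℝ)) (fun x t => by simp [Function.update_apply]; try ring)]
  ring

lemma dd2i0 : pd 0 (fun x : Fin 3 → ℝ => (0 : ℝ)) = fun x : Fin 3 → ℝ => (0 : ℝ) := by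
  funext x
  rw [pd_poly 0 (by fun_prop) (fun x => (0:ℝ)) (fun x => (0:ℝ)) (fun x => (0:ℝ)) (fun x => (0:ℝ)) (fun x t => by simp [Function.update_apply]; try ring)]
  ring

lemma d2i1 : pd 1 (fun x : Fin 3 → ℝ => x 2) = fun x : Fin 3 → ℝ => (0 : ℝ) := by
  funext x
  rw [pd_poly 1 (by fun_prop) (fun x => (x 2:ℝ)) (fun x => (0:ℝ)) (fun x => (0:ℝ)) (fun x => (0:ℝ)) (fun x t => by simp [Function.update_apply]; try ring)]
  ring

lemma dd2i1 : pd 1 (fun x : Fin 3 → ℝ => (0 : ℝ)) = fun x : Fin 3 → ℝ => (0 : ℝ) := by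
  funext x
  rw [pd_poly 1 (by fun_prop) (fun x => (0:ℝ)) (fun x => (0:ℝ)) (fun x => (0:ℝ)) (fun x => (0:ℝ)) (fun x t => by simp [Function.update_apply]; try ring)]
  ring

lemma d2i2 : pd 2 (fun x : Fin 3 → ℝ => x 2) = fun x : Fin 3 → ℝ => (1 : ℝ) := by
  funext x
  rw [pd_poly 2 (by fun_prop) (fun x => (0:ℝ)) (fun x => (1:ℝ)) (fun x => (0:ℝ)) (fun x => (0:ℝ)) (fun x t => by simp [Function.update_apply]; try ring)]
  ring

lemma dd2i2 : pd 2 (fun x : Fin 3 → ℝ => (1 : ℝ)) = fun x : Fin 3 → ℝ => (0 : ℝ) := by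
  funext x
  rw [pd_poly 2 (by fun_prop) (fun x => (1:ℝ)) (fun x => (0:ℝ)) (fun x => (0:ℝ)) (fun x => (0:ℝ)) (fun x t => by simp [Function.update_apply]; try ring)]
  ring

lemma sol2 : IsSol (fun x : Fin 3 → ℝ => x 2) := by
  refine ⟨by fun_prop, fun x => ?_, fun x => ?_⟩
  · rw [d2i2, dd2i2, d2i0, dd2i0]; ring
  · rw [d2i1, dd2i1]

lemma d3i0 : pd 0 (fun x : Fin 3 → ℝ => x 0 * x 2) = fun x : Fin 3 → ℝ => (x 2 : ℝ) := by
  funext x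
  rw [pd_poly 0 (by fun_prop) (fun x => (0:ℝ)) (fun x => (x 2:ℝ)) (fun x => (0:ℝ)) (fun x => (0:ℝ)) (fun x t => by simp [Function.update_apply]; try ring)]
  ring

lemma dd3i0 : pd 0 (fun x : Fin 3 → ℝ => (x 2 : ℝ)) = fun x : Fin 3 → ℝ => (0 : ℝ) := by
  funext x
  rw [pd_poly 0 (by fun_prop) (fun x => (x 2:ℝ)) (fun x => (0:ℝ)) (fun x => (0:ℝ)) (fun x => (0:ℝ)) (fun x t => by simp [Function.update_apply]; try ring)]
  ring

lemma d3i1 : pd 1 (fun x : Fin 3 → ℝ => x 0 * x 2) = fun x : Fin 3 → ℝ => (0 : ℝ) := by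
  funext x
  rw [pd_poly 1 (by fun_prop) (fun x => (x 0 * x 2:ℝ)) (fun x => (0:ℝ)) (fun x => (0:ℝ)) (fun x => (0:ℝ)) (fun x t => by simp [Function.update_apply]; try ring)]
  ring

lemma dd3i1 : pd 1 (fun x : Fin 3 → ℝ => (0 : ℝ)) = fun x : Fin 3 → ℝ => (0 : ℝ) := by
  funext x
  rw [pd_poly 1 (by fun_prop) (fun x => (0:ℝ)) (fun x => (0:ℝ)) (fun x => (0:ℝ)) (fun x => (0:ℝ)) (fun x t => by simp [Function.update_apply]; try ring)]
  ring

lemma d3i2 : pd 2 (fun x : Fin 3 → ℝ => x 0 * x 2) = fun x : Fin 3 → ℝ => (x 0 : ℝ) := by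
  funext x
  rw [pd_poly 2 (by fun_prop) (fun x => (0:ℝ)) (fun x => (x 0:ℝ)) (fun x => (0:ℝ)) (fun x => (0:ℝ)) (fun x t => by simp [Function.update_apply]; try ring)]
  ring

lemma dd3i2 : pd 2 (fun x : Fin 3 → ℝ => (x 0 : ℝ)) = fun x : Fin 3 → ℝ => (0 : ℝ) := by
  funext x
  rw [pd_poly 2 (by fun_prop) (fun x => (x 0:ℝ)) (fun x => (0:ℝ)) (fun x => (0:ℝ)) (fun x => (0:ℝ)) (fun x t => by simp [Function.update_apply]; try ring)]
  ring

lemma sol3 : IsSol (fun x : Fin 3 → ℝ => x 0 * x 2) := by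
  refine ⟨by fun_prop, fun x => ?_, fun x => ?_⟩
  · rw [d3i2, dd3i2, d3i0, dd3i0]; ring
  · rw [d3i1, dd3i1]

lemma d4i0 : pd 0 (fun x : Fin 3 → ℝ => x 1) = fun x : Fin 3 → ℝ => (0 : ℝ) := by
  funext x
  rw [pd_poly 0 (by fun_prop) (fun x => (x 1:ℝ)) (fun x => (0:ℝ)) (fun x => (0:ℝ)) (fun x => (0:ℝ)) (fun x t => by simp [Function.update_apply]; try ring)]
  ring

lemma dd4i0 : pd 0 (fun x : Fin 3 → ℝ => (0 : ℝ)) = fun x : Fin 3 → ℝ => (0 : ℝ) := by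
  funext x
  rw [pd_poly 0 (by fun_prop) (fun x => (0:ℝ)) (fun x => (0:ℝ)) (fun x => (0:ℝ)) (fun x => (0:ℝ)) (fun x t => by simp [Function.update_apply]; try ring)]
  ring

lemma d4i1 : pd 1 (fun x : Fin 3 → ℝ => x 1) = fun x : Fin 3 → ℝ => (1 : ℝ) := by
  funext x
  rw [pd_poly 1 (by fun_prop) (fun x => (0:ℝ)) (fun x => (1:ℝ)) (fun x => (0:ℝ)) (fun x => (0:ℝ)) (fun x t => by simp [Function.update_apply]; try ring)]
  ring

lemma dd4i1 : pd 1 (fun x : Fin 3 → ℝ => (1 : ℝ)) = fun x : Fin 3 → ℝ => (0 : ℝ) := by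
  funext x
  rw [pd_poly 1 (by fun_prop) (fun x => (1:ℝ)) (fun x => (0:ℝ)) (fun x => (0:ℝ)) (fun x => (0:ℝ)) (fun x t => by simp [Function.update_apply]; try ring)]
  ring

lemma d4i2 : pd 2 (fun x : Fin 3 → ℝ => x 1) = fun x : Fin 3 → ℝ => (0 : ℝ) := by
  funext x
  rw [pd_poly 2 (by fun_prop) (fun x => (x 1:ℝ)) (fun x => (0:ℝ)) (fun x => (0:ℝ)) (fun x => (0:ℝ)) (fun x t => by simp [Function.update_apply]; try ring)]
  ring

lemma dd4i2 : pd 2 (fun x : Fin 3 → ℝ => (0 : ℝ)) = fun x : Fin 3 → ℝ => (0 : ℝ) := by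
  funext x
  rw [pd_poly 2 (by fun_prop) (fun x => (0:ℝ)) (fun x => (0:ℝ)) (fun x => (0:ℝ)) (fun x => (0:ℝ)) (fun x t => by simp [Function.update_apply]; try ring)]
  ring

lemma sol4 : IsSol (fun x : Fin 3 → ℝ => x 1) := by
  refine ⟨by fun_prop, fun x => ?_, fun x => ?_⟩
  · rw [d4i2, dd4i2, d4i0, dd4i0]; ring
  · rw [d4i1, dd4i1]

lemma d5i0 : pd 0 (fun x : Fin 3 → ℝ => x 1 * x 2) = fun x : Fin 3 → ℝ => (0 : ℝ) := by
  funext x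
  rw [pd_poly 0 (by fun_prop) (fun x => (x 1 * x 2:ℝ)) (fun x => (0:ℝ)) (fun x => (0:ℝ)) (fun x => (0:ℝ)) (fun x t => by simp [Function.update_apply]; try ring)]
  ring

lemma dd5i0 : pd 0 (fun x : Fin 3 → ℝ => (0 : ℝ)) = fun x : Fin 3 → ℝ => (0 : ℝ) := by
  funext x
  rw [pd_poly 0 (by fun_prop) (fun x => (0:ℝ)) (fun x => (0:ℝ)) (fun x => (0:ℝ)) (fun x => (0:ℝ)) (fun x t => by simp [Function.update_apply]; try ring)]
  ring

lemma d5i1 : pd 1 (fun x : Fin 3 → ℝ => x 1 * x 2) = fun x : Fin 3 → ℝ => (x 2 : ℝ) := by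
  funext x
  rw [pd_poly 1 (by fun_prop) (fun x => (0:ℝ)) (fun x => (x 2:ℝ)) (fun x => (0:ℝ)) (fun x => (0:ℝ)) (fun x t => by simp [Function.update_apply]; try ring)]
  ring

lemma dd5i1 : pd 1 (fun x : Fin 3 → ℝ => (x 2 : ℝ)) = fun x : Fin 3 → ℝ => (0 : ℝ) := by
  funext x
  rw [pd_poly 1 (by fun_prop) (fun x => (x 2:ℝ)) (fun x => (0:ℝ)) (fun x => (0:ℝ)) (fun x => (0:ℝ)) (fun x t => by simp [Function.update_apply]; try ring)]
  ring

lemma d5i2 : pd 2 (fun x : Fin 3 → ℝ => x 1 * x 2) = fun x : Fin 3 → ℝ => (x 1 : ℝ) := by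
  funext x
  rw [pd_poly 2 (by fun_prop) (fun x => (0:ℝ)) (fun x => (x 1:ℝ)) (fun x => (0:ℝ)) (fun x => (0:ℝ)) (fun x t => by simp [Function.update_apply]; try ring)]
  ring

lemma dd5i2 : pd 2 (fun x : Fin 3 → ℝ => (x 1 : ℝ)) = fun x : Fin 3 → ℝ => (0 : ℝ) := by
  funext x
  rw [pd_poly 2 (by fun_prop) (fun x => (x 1:ℝ)) (fun x => (0:ℝ)) (fun x => (0:ℝ)) (fun x => (0:ℝ)) (fun x t => by simp [Function.update_apply]; try ring)]
  ring

lemma sol5 : IsSol (fun x : Fin 3 → ℝ => x 1 * x 2) := by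
  refine ⟨by fun_prop, fun x => ?_, fun x => ?_⟩
  · rw [d5i2, dd5i2, d5i0, dd5i0]; ring
  · rw [d5i1, dd5i1]

lemma d6i0 : pd 0 (fun x : Fin 3 → ℝ => x 0 * x 1) = fun x : Fin 3 → ℝ => (x 1 : ℝ) := by
  funext x
  rw [pd_poly 0 (by fun_prop) (fun x => (0:ℝ)) (fun x => (x 1:ℝ)) (fun x => (0:ℝ)) (fun x => (0:ℝ)) (fun x t => by simp [Function.update_apply]; try ring)]
  ring

lemma dd6i0 : pd 0 (fun x : Fin 3 → ℝ => (x 1 : ℝ)) = fun x : Fin 3 → ℝ => (0 : ℝ) := by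
  funext x
  rw [pd_poly 0 (by fun_prop) (fun x => (x 1:ℝ)) (fun x => (0:ℝ)) (fun x => (0:ℝ)) (fun x => (0:ℝ)) (fun x t => by simp [Function.update_apply]; try ring)]
  ring

lemma d6i1 : pd 1 (fun x : Fin 3 → ℝ => x 0 * x 1) = fun x : Fin 3 → ℝ => (x 0 : ℝ) := by
  funext x
  rw [pd_poly 1 (by fun_prop) (fun x => (0:ℝ)) (fun x => (x 0:ℝ)) (fun x => (0:ℝ)) (fun x => (0:ℝ)) (fun x t => by simp [Function.update_apply]; try ring)]
  ring

lemma dd6i1 : pd 1 (fun x : Fin 3 → ℝ => (x 0 : ℝ)) = fun x : Fin 3 → ℝ => (0 : ℝ) := by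
  funext x
  rw [pd_poly 1 (by fun_prop) (fun x => (x 0:ℝ)) (fun x => (0:ℝ)) (fun x => (0:ℝ)) (fun x => (0:ℝ)) (fun x t => by simp [Function.update_apply]; try ring)]
  ring

lemma d6i2 : pd 2 (fun x : Fin 3 → ℝ => x 0 * x 1) = fun x : Fin 3 → ℝ => (0 : ℝ) := by
  funext x
  rw [pd_poly 2 (by fun_prop) (fun x => (x 0 * x 1:ℝ)) (fun x => (0:ℝ)) (fun x => (0:ℝ)) (fun x => (0:ℝ)) (fun x t => by simp [Function.update_apply]; try ring)]
  ring

lemma dd6i2 : pd 2 (fun x : Fin 3 → ℝ => (0 : ℝ)) = fun x : Fin 3 → ℝ => (0 : ℝ) := by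
  funext x
  rw [pd_poly 2 (by fun_prop) (fun x => (0:ℝ)) (fun x => (0:ℝ)) (fun x => (0:ℝ)) (fun x => (0:ℝ)) (fun x t => by simp [Function.update_apply]; try ring)]
  ring

lemma sol6 : IsSol (fun x : Fin 3 → ℝ => x 0 * x 1) := by
  refine ⟨by fun_prop, fun x => ?_, fun x => ?_⟩
  · rw [d6i2, dd6i2, d6i0, dd6i0]; ring
  · rw [d6i1, dd6i1]

lemma d7i0 : pd 0 (fun x : Fin 3 → ℝ => x 0 * (x 1 * x 2)) = fun x : Fin 3 → ℝ => (x 1 * x 2 : ℝ) := by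
  funext x
  rw [pd_poly 0 (by fun_prop) (fun x => (0:ℝ)) (fun x => (x 1 * x 2:ℝ)) (fun x => (0:ℝ)) (fun x => (0:ℝ)) (fun x t => by simp [Function.update_apply]; try ring)]
  ring

lemma dd7i0 : pd 0 (fun x : Fin 3 → ℝ => (x 1 * x 2 : ℝ)) = fun x : Fin 3 → ℝ => (0 : ℝ) := by
  funext x
  rw [pd_poly 0 (by fun_prop) (fun x => (x 1 * x 2:ℝ)) (fun x => (0:ℝ)) (fun x => (0:ℝ)) (fun x => (0:ℝ)) (fun x t => by simp [Function.update_apply]; try ring)]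
  ring

lemma d7i1 : pd 1 (fun x : Fin 3 → ℝ => x 0 * (x 1 * x 2)) = fun x : Fin 3 → ℝ => (x 0 * x 2 : ℝ) := by
  funext x
  rw [pd_poly 1 (by fun_prop) (fun x => (0:ℝ)) (fun x => (x 0 * x 2:ℝ)) (fun x => (0:ℝ)) (fun x => (0:ℝ)) (fun x t => by simp [Function.update_apply]; try ring)]
  ring

lemma dd7i1 : pd 1 (fun x : Fin 3 → ℝ => (x 0 * x 2 : ℝ)) = fun x : Fin 3 → ℝ => (0 : ℝ) := by
  funext x
  rw [pd_poly 1 (by fun_prop) (fun x => (x 0 * x 2:ℝ)) (fun x => (0:ℝ)) (fun x => (0:ℝ)) (fun x => (0:ℝ)) (fun x t => by simp [Function.update_apply]; try ring)]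
  ring

lemma d7i2 : pd 2 (fun x : Fin 3 → ℝ => x 0 * (x 1 * x 2)) = fun x : Fin 3 → ℝ => (x 0 * x 1 : ℝ) := by
  funext x
  rw [pd_poly 2 (by fun_prop) (fun x => (0:ℝ)) (fun x => (x 0 * x 1:ℝ)) (fun x => (0:ℝ)) (fun x => (0:ℝ)) (fun x t => by simp [Function.update_apply]; try ring)]
  ring

lemma dd7i2 : pd 2 (fun x : Fin 3 → ℝ => (x 0 * x 1 : ℝ)) = fun x : Fin 3 → ℝ => (0 : ℝ) := by
  funext x
  rw [pd_poly 2 (by fun_prop) (fun x => (x 0 * x 1:ℝ)) (fun x => (0:ℝ)) (fun x => (0:ℝ)) (fun x => (0:ℝ)) (fun x t => by simp [Function.update_apply]; try ring)]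
  ring

lemma sol7 : IsSol (fun x : Fin 3 → ℝ => x 0 * (x 1 * x 2)) := by
  refine ⟨by fun_prop, fun x => ?_, fun x => ?_⟩
  · rw [d7i2, dd7i2, d7i0, dd7i0]; ring
  · rw [d7i1, dd7i1]

lemma d8i0 : pd 0 (fun x : Fin 3 → ℝ => x 0 ^ 2 + x 1 * x 2 ^ 2) = fun x : Fin 3 → ℝ => (2 * x 0 : ℝ) := by
  funext x
  rw [pd_poly 0 (by fun_prop) (fun x => (x 1 * x 2 ^ 2:ℝ)) (fun x => (0:ℝ)) (fun x => (1:ℝ)) (fun x => (0:ℝ)) (fun x t => by simp [Function.update_apply]; try ring)]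
  ring

lemma dd8i0 : pd 0 (fun x : Fin 3 → ℝ => (2 * x 0 : ℝ)) = fun x : Fin 3 → ℝ => (2 : ℝ) := by
  funext x
  rw [pd_poly 0 (by fun_prop) (fun x => (0:ℝ)) (fun x => (2:ℝ)) (fun x => (0:ℝ)) (fun x => (0:ℝ)) (fun x t => by simp [Function.update_apply]; try ring)]
  ring

lemma d8i1 : pd 1 (fun x : Fin 3 → ℝ => x 0 ^ 2 + x 1 * x 2 ^ 2) = fun x : Fin 3 → ℝ => (x 2 ^ 2 : ℝ) := by
  funext x
  rw [pd_poly 1 (by fun_prop) (fun x => (x 0 ^ 2:ℝ)) (fun x => (x 2 ^ 2:ℝ)) (fun x => (0:ℝ)) (fun x => (0:ℝ)) (fun x t => by simp [Function.update_apply]; try ring)]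
  ring

lemma dd8i1 : pd 1 (fun x : Fin 3 → ℝ => (x 2 ^ 2 : ℝ)) = fun x : Fin 3 → ℝ => (0 : ℝ) := by
  funext x
  rw [pd_poly 1 (by fun_prop) (fun x => (x 2 ^ 2:ℝ)) (fun x => (0:ℝ)) (fun x => (0:ℝ)) (fun x => (0:ℝ)) (fun x t => by simp [Function.update_apply]; try ring)]
  ring

lemma d8i2 : pd 2 (fun x : Fin 3 → ℝ => x 0 ^ 2 + x 1 * x 2 ^ 2) = fun x : Fin 3 → ℝ => (2 * (x 1 * x 2) : ℝ) := by
  funext x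
  rw [pd_poly 2 (by fun_prop) (fun x => (x 0 ^ 2:ℝ)) (fun x => (0:ℝ)) (fun x => (x 1:ℝ)) (fun x => (0:ℝ)) (fun x t => by simp [Function.update_apply]; try ring)]
  ring

lemma dd8i2 : pd 2 (fun x : Fin 3 → ℝ => (2 * (x 1 * x 2) : ℝ)) = fun x : Fin 3 → ℝ => (2 * x 1 : ℝ) := by
  funext x
  rw [pd_poly 2 (by fun_prop) (fun x => (0:ℝ)) (fun x => (2 * x 1:ℝ)) (fun x => (0:ℝ)) (fun x => (0:ℝ)) (fun x t => by simp [Function.update_apply]; try ring)]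
  ring

lemma sol8 : IsSol (fun x : Fin 3 → ℝ => x 0 ^ 2 + x 1 * x 2 ^ 2) := by
  refine ⟨by fun_prop, fun x => ?_, fun x => ?_⟩
  · rw [d8i2, dd8i2, d8i0, dd8i0]; ring
  · rw [d8i1, dd8i1]

lemma d9i0 : pd 0 (fun x : Fin 3 → ℝ => x 0 ^ 3 + 3 * (x 0 * (x 1 * x 2 ^ 2))) = fun x : Fin 3 → ℝ => (3 * (x 1 * x 2 ^ 2) + 3 * x 0 ^ 2 : ℝ) := by
  funext x
  rw [pd_poly 0 (by fun_prop) (fun x => (0:ℝ)) (fun x => (3 * (x 1 * x 2 ^ 2):ℝ)) (fun x => (0:ℝ)) (fun x => (1:ℝ)) (fun x t => by simp [Function.update_apply]; try ring)]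
  ring

lemma dd9i0 : pd 0 (fun x : Fin 3 → ℝ => (3 * (x 1 * x 2 ^ 2) + 3 * x 0 ^ 2 : ℝ)) = fun x : Fin 3 → ℝ => (6 * x 0 : ℝ) := by
  funext x
  rw [pd_poly 0 (by fun_prop) (fun x => (3 * (x 1 * x 2 ^ 2):ℝ)) (fun x => (0:ℝ)) (fun x => (3:ℝ)) (fun x => (0:ℝ)) (fun x t => by simp [Function.update_apply]; try ring)]
  ring

lemma d9i1 : pd 1 (fun x : Fin 3 → ℝ => x 0 ^ 3 + 3 * (x 0 * (x 1 * x 2 ^ 2))) = fun x : Fin 3 → ℝ => (3 * (x 0 * x 2 ^ 2) : ℝ) := by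
  funext x
  rw [pd_poly 1 (by fun_prop) (fun x => (x 0 ^ 3:ℝ)) (fun x => (3 * (x 0 * x 2 ^ 2):ℝ)) (fun x => (0:ℝ)) (fun x => (0:ℝ)) (fun x t => by simp [Function.update_apply]; try ring)]
  ring

lemma dd9i1 : pd 1 (fun x : Fin 3 → ℝ => (3 * (x 0 * x 2 ^ 2) : ℝ)) = fun x : Fin 3 → ℝ => (0 : ℝ) := by
  funext x
  rw [pd_poly 1 (by fun_prop) (fun x => (3 * (x 0 * x 2 ^ 2):ℝ)) (fun x => (0:ℝ)) (fun x => (0:ℝ)) (fun x => (0:ℝ)) (fun x t => by simp [Function.update_apply]; try ring)]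
  ring

lemma d9i2 : pd 2 (fun x : Fin 3 → ℝ => x 0 ^ 3 + 3 * (x 0 * (x 1 * x 2 ^ 2))) = fun x : Fin 3 → ℝ => (6 * (x 0 * (x 1 * x 2)) : ℝ) := by
  funext x
  rw [pd_poly 2 (by fun_prop) (fun x => (x 0 ^ 3:ℝ)) (fun x => (0:ℝ)) (fun x => (3 * (x 0 * x 1):ℝ)) (fun x => (0:ℝ)) (fun x t => by simp [Function.update_apply]; try ring)]
  ring

lemma dd9i2 : pd 2 (fun x : Fin 3 → ℝ => (6 * (x 0 * (x 1 * x 2)) : ℝ)) = fun x : Fin 3 → ℝ => (6 * (x 0 * x 1) : ℝ) := by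
  funext x
  rw [pd_poly 2 (by fun_prop) (fun x => (0:ℝ)) (fun x => (6 * (x 0 * x 1):ℝ)) (fun x => (0:ℝ)) (fun x => (0:ℝ)) (fun x t => by simp [Function.update_apply]; try ring)]
  ring

lemma sol9 : IsSol (fun x : Fin 3 → ℝ => x 0 ^ 3 + 3 * (x 0 * (x 1 * x 2 ^ 2))) := by
  refine ⟨by fun_prop, fun x => ?_, fun x => ?_⟩
  · rw [d9i2, dd9i2, d9i0, dd9i0]; ring
  · rw [d9i1, dd9i1]

lemma d10i0 : pd 0 (fun x : Fin 3 → ℝ => 3 * (x 0 ^ 2 * x 2) + x 1 * x 2 ^ 3) = fun x : Fin 3 → ℝ => (6 * (x 0 * x 2) : ℝ) := by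
  funext x
  rw [pd_poly 0 (by fun_prop) (fun x => (x 1 * x 2 ^ 3:ℝ)) (fun x => (0:ℝ)) (fun x => (3 * x 2:ℝ)) (fun x => (0:ℝ)) (fun x t => by simp [Function.update_apply]; try ring)]
  ring

lemma dd10i0 : pd 0 (fun x : Fin 3 → ℝ => (6 * (x 0 * x 2) : ℝ)) = fun x : Fin 3 → ℝ => (6 * x 2 : ℝ) := by
  funext x
  rw [pd_poly 0 (by fun_prop) (fun x => (0:ℝ)) (fun x => (6 * x 2:ℝ)) (fun x => (0:ℝ)) (fun x => (0:ℝ)) (fun x t => by simp [Function.update_apply]; try ring)]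
  ring

lemma d10i1 : pd 1 (fun x : Fin 3 → ℝ => 3 * (x 0 ^ 2 * x 2) + x 1 * x 2 ^ 3) = fun x : Fin 3 → ℝ => (x 2 ^ 3 : ℝ) := by
  funext x
  rw [pd_poly 1 (by fun_prop) (fun x => (3 * (x 0 ^ 2 * x 2):ℝ)) (fun x => (x 2 ^ 3:ℝ)) (fun x => (0:ℝ)) (fun x => (0:ℝ)) (fun x t => by simp [Function.update_apply]; try ring)]
  ring

lemma dd10i1 : pd 1 (fun x : Fin 3 → ℝ => (x 2 ^ 3 : ℝ)) = fun x : Fin 3 → ℝ => (0 : ℝ) := by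
  funext x
  rw [pd_poly 1 (by fun_prop) (fun x => (x 2 ^ 3:ℝ)) (fun x => (0:ℝ)) (fun x => (0:ℝ)) (fun x => (0:ℝ)) (fun x t => by simp [Function.update_apply]; try ring)]
  ring

lemma d10i2 : pd 2 (fun x : Fin 3 → ℝ => 3 * (x 0 ^ 2 * x 2) + x 1 * x 2 ^ 3) = fun x : Fin 3 → ℝ => (3 * x 0 ^ 2 + 3 * (x 1 * x 2 ^ 2) : ℝ) := by
  funext x
  rw [pd_poly 2 (by fun_prop) (fun x => (0:ℝ)) (fun x => (3 * x 0 ^ 2:ℝ)) (fun x => (0:ℝ)) (fun x => (x 1:ℝ)) (fun x t => by simp [Function.update_apply]; try ring)]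
  ring

lemma dd10i2 : pd 2 (fun x : Fin 3 → ℝ => (3 * x 0 ^ 2 + 3 * (x 1 * x 2 ^ 2) : ℝ)) = fun x : Fin 3 → ℝ => (6 * (x 1 * x 2) : ℝ) := by
  funext x
  rw [pd_poly 2 (by fun_prop) (fun x => (3 * x 0 ^ 2:ℝ)) (fun x => (0:ℝ)) (fun x => (3 * x 1:ℝ)) (fun x => (0:ℝ)) (fun x t => by simp [Function.update_apply]; try ring)]
  ring

lemma sol10 : IsSol (fun x : Fin 3 → ℝ => 3 * (x 0 ^ 2 * x 2) + x 1 * x 2 ^ 3) := by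
  refine ⟨by fun_prop, fun x => ?_, fun x => ?_⟩
  · rw [d10i2, dd10i2, d10i0, dd10i0]; ring
  · rw [d10i1, dd10i1]

lemma d11i0 : pd 0 (fun x : Fin 3 → ℝ => x 0 ^ 3 * x 2 + x 0 * (x 1 * x 2 ^ 3)) = fun x : Fin 3 → ℝ => (x 1 * x 2 ^ 3 + 3 * (x 0 ^ 2 * x 2) : ℝ) := by
  funext x
  rw [pd_poly 0 (by fun_prop) (fun x => (0:ℝ)) (fun x => (x 1 * x 2 ^ 3:ℝ)) (fun x => (0:ℝ)) (fun x => (x 2:ℝ)) (fun x t => by simp [Function.update_apply]; try ring)]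
  ring

lemma dd11i0 : pd 0 (fun x : Fin 3 → ℝ => (x 1 * x 2 ^ 3 + 3 * (x 0 ^ 2 * x 2) : ℝ)) = fun x : Fin 3 → ℝ => (6 * (x 0 * x 2) : ℝ) := by
  funext x
  rw [pd_poly 0 (by fun_prop) (fun x => (x 1 * x 2 ^ 3:ℝ)) (fun x => (0:ℝ)) (fun x => (3 * x 2:ℝ)) (fun x => (0:ℝ)) (fun x t => by simp [Function.update_apply]; try ring)]
  ring

lemma d11i1 : pd 1 (fun x : Fin 3 → ℝ => x 0 ^ 3 * x 2 + x 0 * (x 1 * x 2 ^ 3)) = fun x : Fin 3 → ℝ => (x 0 * x 2 ^ 3 : ℝ) := by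
  funext x
  rw [pd_poly 1 (by fun_prop) (fun x => (x 0 ^ 3 * x 2:ℝ)) (fun x => (x 0 * x 2 ^ 3:ℝ)) (fun x => (0:ℝ)) (fun x => (0:ℝ)) (fun x t => by simp [Function.update_apply]; try ring)]
  ring

lemma dd11i1 : pd 1 (fun x : Fin 3 → ℝ => (x 0 * x 2 ^ 3 : ℝ)) = fun x : Fin 3 → ℝ => (0 : ℝ) := by
  funext x
  rw [pd_poly 1 (by fun_prop) (fun x => (x 0 * x 2 ^ 3:ℝ)) (fun x => (0:ℝ)) (fun x => (0:ℝ)) (fun x => (0:ℝ)) (fun x t => by simp [Function.update_apply]; try ring)]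
  ring

lemma d11i2 : pd 2 (fun x : Fin 3 → ℝ => x 0 ^ 3 * x 2 + x 0 * (x 1 * x 2 ^ 3)) = fun x : Fin 3 → ℝ => (x 0 ^ 3 + 3 * (x 0 * (x 1 * x 2 ^ 2)) : ℝ) := by
  funext x
  rw [pd_poly 2 (by fun_prop) (fun x => (0:ℝ)) (fun x => (x 0 ^ 3:ℝ)) (fun x => (0:ℝ)) (fun x => (x 0 * x 1:ℝ)) (fun x t => by simp [Function.update_apply]; try ring)]
  ring

lemma dd11i2 : pd 2 (fun x : Fin 3 → ℝ => (x 0 ^ 3 + 3 * (x 0 * (x 1 * x 2 ^ 2)) : ℝ)) = fun x : Fin 3 → ℝ => (6 * (x 0 * (x 1 * x 2)) : ℝ) := by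
  funext x
  rw [pd_poly 2 (by fun_prop) (fun x => (x 0 ^ 3:ℝ)) (fun x => (0:ℝ)) (fun x => (3 * (x 0 * x 1):ℝ)) (fun x => (0:ℝ)) (fun x t => by simp [Function.update_apply]; try ring)]
  ring

lemma sol11 : IsSol (fun x : Fin 3 → ℝ => x 0 ^ 3 * x 2 + x 0 * (x 1 * x 2 ^ 3)) := by
  refine ⟨by fun_prop, fun x => ?_, fun x => ?_⟩
  · rw [d11i2, dd11i2, d11i0, dd11i0]; ring
  · rw [d11i1, dd11i1]



def bv : Fin 12 → ((Fin 3 → ℝ) → ℝ) :=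
  ![fun _ => (1:ℝ), fun x => x 0, fun x => x 2, fun x => x 0 * x 2,
    fun x => x 1, fun x => x 1 * x 2, fun x => x 0 * x 1, fun x => x 0 * (x 1 * x 2),
    fun x => x 0 ^ 2 + x 1 * x 2 ^ 2, fun x => x 0 ^ 3 + 3 * (x 0 * (x 1 * x 2 ^ 2)),
    fun x => 3 * (x 0 ^ 2 * x 2) + x 1 * x 2 ^ 3, fun x => x 0 ^ 3 * x 2 + x 0 * (x 1 * x 2 ^ 3)]

lemma bvE0 : bv 0 = fun _ => (1:ℝ) := rfl
lemma bvE1 : bv 1 = fun x => x 0 := rfl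
lemma bvE2 : bv 2 = fun x => x 2 := rfl
lemma bvE3 : bv 3 = fun x => x 0 * x 2 := rfl
lemma bvE4 : bv 4 = fun x => x 1 := rfl
lemma bvE5 : bv 5 = fun x => x 1 * x 2 := rfl
lemma bvE6 : bv 6 = fun x => x 0 * x 1 := rfl
lemma bvE7 : bv 7 = fun x => x 0 * (x 1 * x 2) := rfl
lemma bvE8 : bv 8 = fun x => x 0 ^ 2 + x 1 * x 2 ^ 2 := rfl
lemma bvE9 : bv 9 = fun x => x 0 ^ 3 + 3 * (x 0 * (x 1 * x 2 ^ 2)) := rfl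
lemma bvE10 : bv 10 = fun x => 3 * (x 0 ^ 2 * x 2) + x 1 * x 2 ^ 3 := rfl
lemma bvE11 : bv 11 = fun x => x 0 ^ 3 * x 2 + x 0 * (x 1 * x 2 ^ 3) := rfl

lemma sum_univ_twelve (f : Fin 12 → ℝ) : ∑ i, f i =
    f 0 + f 1 + f 2 + f 3 + f 4 + f 5 + f 6 + f 7 + f 8 + f 9 + f 10 + f 11 := by
  rw [Fin.sum_univ_castSucc, Fin.sum_univ_castSucc, Fin.sum_univ_castSucc,
    Fin.sum_univ_castSucc, Fin.sum_univ_eight]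
  rfl

lemma v12_0 (a0 a1 a2 a3 a4 a5 a6 a7 a8 a9 a10 a11 : ℝ) : ![a0,a1,a2,a3,a4,a5,a6,a7,a8,a9,a10,a11] (0 : Fin 12) = a0 := rfl
lemma v12_1 (a0 a1 a2 a3 a4 a5 a6 a7 a8 a9 a10 a11 : ℝ) : ![a0,a1,a2,a3,a4,a5,a6,a7,a8,a9,a10,a11] (1 : Fin 12) = a1 := rfl
lemma v12_2 (a0 a1 a2 a3 a4 a5 a6 a7 a8 a9 a10 a11 : ℝ) : ![a0,a1,a2,a3,a4,a5,a6,a7,a8,a9,a10,a11] (2 : Fin 12) = a2 := rfl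
lemma v12_3 (a0 a1 a2 a3 a4 a5 a6 a7 a8 a9 a10 a11 : ℝ) : ![a0,a1,a2,a3,a4,a5,a6,a7,a8,a9,a10,a11] (3 : Fin 12) = a3 := rfl
lemma v12_4 (a0 a1 a2 a3 a4 a5 a6 a7 a8 a9 a10 a11 : ℝ) : ![a0,a1,a2,a3,a4,a5,a6,a7,a8,a9,a10,a11] (4 : Fin 12) = a4 := rfl
lemma v12_5 (a0 a1 a2 a3 a4 a5 a6 a7 a8 a9 a10 a11 : ℝ) : ![a0,a1,a2,a3,a4,a5,a6,a7,a8,a9,a10,a11] (5 : Fin 12) = a5 := rfl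
lemma v12_6 (a0 a1 a2 a3 a4 a5 a6 a7 a8 a9 a10 a11 : ℝ) : ![a0,a1,a2,a3,a4,a5,a6,a7,a8,a9,a10,a11] (6 : Fin 12) = a6 := rfl
lemma v12_7 (a0 a1 a2 a3 a4 a5 a6 a7 a8 a9 a10 a11 : ℝ) : ![a0,a1,a2,a3,a4,a5,a6,a7,a8,a9,a10,a11] (7 : Fin 12) = a7 := rfl
lemma v12_8 (a0 a1 a2 a3 a4 a5 a6 a7 a8 a9 a10 a11 : ℝ) : ![a0,a1,a2,a3,a4,a5,a6,a7,a8,a9,a10,a11] (8 : Fin 12) = a8 := rfl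
lemma v12_9 (a0 a1 a2 a3 a4 a5 a6 a7 a8 a9 a10 a11 : ℝ) : ![a0,a1,a2,a3,a4,a5,a6,a7,a8,a9,a10,a11] (9 : Fin 12) = a9 := rfl
lemma v12_10 (a0 a1 a2 a3 a4 a5 a6 a7 a8 a9 a10 a11 : ℝ) : ![a0,a1,a2,a3,a4,a5,a6,a7,a8,a9,a10,a11] (10 : Fin 12) = a10 := rfl
lemma v12_11 (a0 a1 a2 a3 a4 a5 a6 a7 a8 a9 a10 a11 : ℝ) : ![a0,a1,a2,a3,a4,a5,a6,a7,a8,a9,a10,a11] (11 : Fin 12) = a11 := rfl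

lemma vec3_0 (a b c : ℝ) : ![a,b,c] 0 = a := rfl
lemma vec3_1 (a b c : ℝ) : ![a,b,c] 1 = b := rfl
lemma vec3_2 (a b c : ℝ) : ![a,b,c] 2 = c := rfl

lemma bv_lin_indep : LinearIndependent ℝ bv := by
  rw [Fintype.linearIndependent_iff]
  intro g hg
  have H : ∀ a b c : ℝ,
      g 0 * 1 + g 1 * a + g 2 * c + g 3 * (a * c) + g 4 * b + g 5 * (b * c)
      + g 6 * (a * b) + g 7 * (a * (b * c)) + g 8 * (a ^ 2 + b * c ^ 2)
      + g 9 * (a ^ 3 + 3 * (a * (b * c ^ 2))) + g 10 * (3 * (a ^ 2 * c) + b * c ^ 3)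
      + g 11 * (a ^ 3 * c + a * (b * c ^ 3)) = 0 := by
    intro a b c
    have h := congrFun hg ![a,b,c]
    rw [Finset.sum_apply, sum_univ_twelve (fun i => (g i • bv i) ![a,b,c])] at h
    simp only [Pi.smul_apply, smul_eq_mul, bvE0, bvE1, bvE2, bvE3, bvE4, bvE5, bvE6, bvE7,
      bvE8, bvE9, bvE10, bvE11, vec3_0, vec3_1, vec3_2, Pi.zero_apply] at h
    exact h
  have h1 := H 0 0 0
  have h2 := H 1 0 0
  have h3 := H (-1) 0 0
  have h4 := H 2 0 0
  have h5 := H 0 0 1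
  have h6 := H 1 0 1
  have h7 := H (-1) 0 1
  have h8 := H 2 0 1
  have h9 := H 0 1 0
  have h10 := H 1 1 0
  have h11 := H 0 1 1
  have h12 := H 1 1 1
  norm_num at h1 h2 h3 h4 h5 h6 h7 h8 h9 h10 h11 h12
  have q0 : g 0 = 0 := by linarith
  have q8 : g 8 = 0 := by linarith
  have q1 : g 1 = 0 := by linarith
  have q9 : g 9 = 0 := by linarith
  have q2 : g 2 = 0 := by linarith
  have q10 : g 10 = 0 := by linarith
  have q3 : g 3 = 0 := by linarith
  have q11 : g 11 = 0 := by linarith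
  have q4 : g 4 = 0 := by linarith
  have q6 : g 6 = 0 := by linarith
  have q5 : g 5 = 0 := by linarith
  have q7 : g 7 = 0 := by linarith
  intro i
  fin_cases i
  exacts [q0, q1, q2, q3, q4, q5, q6, q7, q8, q9, q10, q11]


lemma span_sol {y : (Fin 3 → ℝ) → ℝ} (hy : IsSol y) :
    ∃ c : Fin 12 → ℝ, y = fun x => ∑ i, c i * bv i x := by
  obtain ⟨hs, e1, e2⟩ := hy
  have dcoord : ∀ j : Fin 3, Differentiable ℝ (fun z : Fin 3 → ℝ => z j) :=
    fun j => diff_of_cd (by fun_prop)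
  have s0 : ContDiff ℝ (⊤:ℕ∞) (pd 0 y) := contDiff_pd 0 hs
  have s1 : ContDiff ℝ (⊤:ℕ∞) (pd 1 y) := contDiff_pd 1 hs
  have s2 : ContDiff ℝ (⊤:ℕ∞) (pd 2 y) := contDiff_pd 2 hs
  have s00 : ContDiff ℝ (⊤:ℕ∞) (pd 0 (pd 0 y)) := contDiff_pd 0 s0
  have du : Differentiable ℝ (pd 0 (pd 0 y)) := diff_of_cd s00
  have du1 : Differentiable ℝ (pd 1 (pd 0 (pd 0 y))) := diff_of_cd (contDiff_pd 1 s00)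
  have e1f : pd 2 (pd 2 y) = fun x => x 1 * pd 0 (pd 0 y) x := funext e1
  have e2f : pd 1 (pd 1 y) = fun _ => (0:ℝ) := funext e2
  -- commutation consequences
  have c122 : pd 1 (pd 2 (pd 2 y)) = pd 2 (pd 2 (pd 1 y)) := by
    rw [pdc s2 1 2, pdc hs 1 2]
  have c1122 : pd 1 (pd 1 (pd 2 (pd 2 y))) = fun _ => 0 := by
    rw [c122, pdc (contDiff_pd 2 s1) 1 2, pdc s1 1 2, e2f, pd_zero_fn, pd_zero_fn]
  have c1100 : pd 1 (pd 1 (pd 0 (pd 0 y))) = fun _ => 0 := by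
    rw [pdc s0 1 0, pdc hs 1 0, pdc (contDiff_pd 0 s1) 1 0, pdc s1 1 0, e2f,
      pd_zero_fn, pd_zero_fn]
  have d1 : ∀ x, pd 1 (pd 2 (pd 2 y)) x
      = pd 0 (pd 0 y) x + x 1 * pd 1 (pd 0 (pd 0 y)) x := by
    intro x
    rw [e1f, pd_mul 1 (dcoord 1 x) (du x), pd_coord]
    norm_num
  have d1f : pd 1 (pd 2 (pd 2 y))
      = fun x => pd 0 (pd 0 y) x + x 1 * pd 1 (pd 0 (pd 0 y)) x := funext d1
  have e4 : ∀ x, pd 1 (pd 0 (pd 0 y)) x = 0 := by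
    intro x
    have l := congrFun c1122 x
    rw [d1f, pd_add (f := pd 0 (pd 0 y)) (g := fun z => z 1 * pd 1 (pd 0 (pd 0 y)) z) 1
        (du x) (((dcoord 1).mul du1) x),
      pd_mul (f := fun z => z 1) (g := pd 1 (pd 0 (pd 0 y))) 1 (dcoord 1 x) (du1 x),
      pd_coord, congrFun c1100 x] at l
    norm_num at l
    -- l : pd 1 (pd 1 ..) x related; conclude
    linarith [l]
  have e3 : ∀ x, pd 1 (pd 2 (pd 2 y)) x = pd 0 (pd 0 y) x := by
    intro x; rw [d1 x, e4 x]; ring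
  -- first splitting: y = F + x1 G
  set F : (Fin 3 → ℝ) → ℝ := fun x => y (kil 1 x) with hFdef
  set G : (Fin 3 → ℝ) → ℝ := fun x => pd 1 y (kil 1 x) with hGdef
  have sF : ContDiff ℝ (⊤:ℕ∞) F := contDiff_comp_kil hs 1
  have sG : ContDiff ℝ (⊤:ℕ∞) G := contDiff_comp_kil s1 1
  have hyFG : ∀ x, y x = F x + x 1 * G x := fun x => pd_affine_struct hs 1 e2 x
  have hF2 : pd 2 F = fun x => pd 2 y (kil 1 x) :=
    funext (pd_comp_kil_ne (diff_of_cd hs) (by decide))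
  have hF0 : pd 0 F = fun x => pd 0 y (kil 1 x) :=
    funext (pd_comp_kil_ne (diff_of_cd hs) (by decide))
  have hG0 : pd 0 G = fun x => pd 0 (pd 1 y) (kil 1 x) :=
    funext (pd_comp_kil_ne (diff_of_cd s1) (by decide))
  have hG2 : pd 2 G = fun x => pd 2 (pd 1 y) (kil 1 x) :=
    funext (pd_comp_kil_ne (diff_of_cd s1) (by decide))
  have F22 : ∀ x, pd 2 (pd 2 F) x = 0 := by
    intro x
    rw [hF2, pd_comp_kil_ne (diff_of_cd s2) (by decide) x, e1 (kil 1 x)]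
    have h11 : kil 1 x 1 = 0 := by simp [kil]
    rw [h11]; ring
  have G00 : ∀ x, pd 0 (pd 0 G) x = 0 := by
    intro x
    rw [hG0, pd_comp_kil_ne (diff_of_cd (contDiff_pd 0 s1)) (by decide) x]
    have hcc : pd 0 (pd 0 (pd 1 y)) = pd 1 (pd 0 (pd 0 y)) := by
      rw [pdc hs 0 1, pdc s0 0 1]
    rw [hcc]
    exact e4 _
  have G22F00 : ∀ x, pd 2 (pd 2 G) x = pd 0 (pd 0 F) x := by
    intro x
    rw [hG2, pd_comp_kil_ne (diff_of_cd (contDiff_pd 2 s1)) (by decide) x,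
      hF0, pd_comp_kil_ne (diff_of_cd s0) (by decide) x]
    have hcc : pd 2 (pd 2 (pd 1 y)) = pd 1 (pd 2 (pd 2 y)) := by
      rw [← pdc hs 1 2, ← pdc s2 1 2]
    rw [hcc]
    exact e3 _
  -- second splitting
  set P : (Fin 3 → ℝ) → ℝ := fun x => F (kil 2 x) with hPdef
  set Q : (Fin 3 → ℝ) → ℝ := fun x => pd 2 F (kil 2 x) with hQdef
  set R : (Fin 3 → ℝ) → ℝ := fun x => G (kil 0 x) with hRdef
  set S : (Fin 3 → ℝ) → ℝ := fun x => pd 0 G (kil 0 x) with hSdef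
  have sP : ContDiff ℝ (⊤:ℕ∞) P := contDiff_comp_kil sF 2
  have sQ : ContDiff ℝ (⊤:ℕ∞) Q := contDiff_comp_kil (contDiff_pd 2 sF) 2
  have sR : ContDiff ℝ (⊤:ℕ∞) R := contDiff_comp_kil sG 0
  have sS : ContDiff ℝ (⊤:ℕ∞) S := contDiff_comp_kil (contDiff_pd 0 sG) 0
  have hFPQ : ∀ x, F x = P x + x 2 * Q x := fun x => pd_affine_struct sF 2 F22 x
  have hGRS : ∀ x, G x = R x + x 0 * S x := fun x => pd_affine_struct sG 0 G00 x
  -- dependence facts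
  have dP : DepOn P 0 := by
    intro x x' h
    show y (kil 1 (kil 2 x)) = y (kil 1 (kil 2 x'))
    congr 1
    funext j; fin_cases j <;> simp [kil, Function.update_apply, h]
  have hQy : ∀ z, Q z = pd 2 y (kil 1 (kil 2 z)) := by
    intro z; rw [hQdef, hF2]
  have dQ : DepOn Q 0 := by
    intro x x' h
    rw [hQy x, hQy x']
    congr 1
    funext j; fin_cases j <;> simp [kil, Function.update_apply, h]
  have dR : DepOn R 2 := by
    intro x x' h
    show pd 1 y (kil 1 (kil 0 x)) = pd 1 y (kil 1 (kil 0 x'))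
    congr 1
    funext j; fin_cases j <;> simp [kil, Function.update_apply, h]
  have hSy : ∀ z, S z = pd 0 (pd 1 y) (kil 1 (kil 0 z)) := by
    intro z; rw [hSdef, hG0]
  have dS : DepOn S 2 := by
    intro x x' h
    rw [hSy x, hSy x']
    congr 1
    funext j; fin_cases j <;> simp [kil, Function.update_apply, h]
  -- differentiability bank
  have dPd := diff_of_cd sP
  have dQd := diff_of_cd sQ
  have dRd := diff_of_cd sR
  have dSd := diff_of_cd sS
  have dp0P : Differentiable ℝ (pd 0 P) := diff_of_cd (contDiff_pd 0 sP)
  have dp0Q : Differentiable ℝ (pd 0 Q) := diff_of_cd (contDiff_pd 0 sQ)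
  have dp2R : Differentiable ℝ (pd 2 R) := diff_of_cd (contDiff_pd 2 sR)
  have dp2S : Differentiable ℝ (pd 2 S) := diff_of_cd (contDiff_pd 2 sS)
  -- expand second derivatives of F and G
  have pd0F : ∀ x, pd 0 F x = pd 0 P x + x 2 * pd 0 Q x := by
    intro x
    have hFf : F = fun z => P z + z 2 * Q z := funext hFPQ
    rw [hFf, pd_add (f := P) (g := fun z => z 2 * Q z) 0 (dPd x) (((dcoord 2).mul dQd) x),
      pd_mul (f := fun z => z 2) (g := Q) 0 (dcoord 2 x) (dQd x), pd_coord]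
    norm_num [Fin.ext_iff]
  have pd00F : ∀ x, pd 0 (pd 0 F) x = pd 0 (pd 0 P) x + x 2 * pd 0 (pd 0 Q) x := by
    intro x
    have hf : pd 0 F = fun z => pd 0 P z + z 2 * pd 0 Q z := funext pd0F
    rw [hf, pd_add (f := pd 0 P) (g := fun z => z 2 * pd 0 Q z) 0 (dp0P x)
        (((dcoord 2).mul dp0Q) x),
      pd_mul (f := fun z => z 2) (g := pd 0 Q) 0 (dcoord 2 x) (dp0Q x), pd_coord]
    norm_num [Fin.ext_iff]
  have pd2G : ∀ x, pd 2 G x = pd 2 R x + x 0 * pd 2 S x := by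
    intro x
    have hGf : G = fun z => R z + z 0 * S z := funext hGRS
    rw [hGf, pd_add (f := R) (g := fun z => z 0 * S z) 2 (dRd x) (((dcoord 0).mul dSd) x),
      pd_mul (f := fun z => z 0) (g := S) 2 (dcoord 0 x) (dSd x), pd_coord]
    norm_num [Fin.ext_iff]
  have pd22G : ∀ x, pd 2 (pd 2 G) x = pd 2 (pd 2 R) x + x 0 * pd 2 (pd 2 S) x := by
    intro x
    have hg : pd 2 G = fun z => pd 2 R z + z 0 * pd 2 S z := funext pd2G
    rw [hg, pd_add (f := pd 2 R) (g := fun z => z 0 * pd 2 S z) 2 (dp2R x)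
        (((dcoord 0).mul dp2S) x),
      pd_mul (f := fun z => z 0) (g := pd 2 S) 2 (dcoord 0 x) (dp2S x), pd_coord]
    norm_num [Fin.ext_iff]
  -- master relation
  have M : ∀ x, pd 2 (pd 2 R) x + x 0 * pd 2 (pd 2 S) x
      = pd 0 (pd 0 P) x + x 2 * pd 0 (pd 0 Q) x := by
    intro x
    rw [← pd22G x, ← pd00F x]
    exact G22F00 x
  -- dependence of second derivatives
  have dPp : DepOn (pd 0 P) 0 := depOn_pd dPd dP
  have dPpp : DepOn (pd 0 (pd 0 P)) 0 := depOn_pd dp0P dPp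
  have dQp : DepOn (pd 0 Q) 0 := depOn_pd dQd dQ
  have dQpp : DepOn (pd 0 (pd 0 Q)) 0 := depOn_pd dp0Q dQp
  have dRp : DepOn (pd 2 R) 2 := depOn_pd dRd dR
  have dRpp : DepOn (pd 2 (pd 2 R)) 2 := depOn_pd dp2R dRp
  have dSp : DepOn (pd 2 S) 2 := depOn_pd dSd dS
  have dSpp : DepOn (pd 2 (pd 2 S)) 2 := depOn_pd dp2S dSp
  -- determine the second derivatives
  have m0 := M 0
  simp only [Pi.zero_apply, zero_mul, add_zero] at m0
  have hp2 : ∀ x, pd 0 (pd 0 P) x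
      = pd 0 (pd 0 P) 0 + pd 2 (pd 2 S) 0 * x 0 := by
    intro x
    have m1 := M (Function.update x 2 0)
    rw [dRpp (Function.update x 2 0) 0 (by simp),
      dSpp (Function.update x 2 0) 0 (by simp),
      dPpp (Function.update x 2 0) x (by simp)] at m1
    rw [show Function.update x 2 0 0 = x 0 by simp,
      show Function.update x 2 0 2 = (0:ℝ) by simp] at m1
    rw [zero_mul, add_zero] at m1
    linear_combination m0 - m1
  have key : ∀ x, pd 0 (pd 0 Q) x
      = pd 2 (pd 2 R) (Pi.single 2 1) + x 0 * pd 2 (pd 2 S) (Pi.single 2 1)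
        - pd 0 (pd 0 P) x := by
    intro x
    have m1 := M (Function.update x 2 1)
    rw [dRpp (Function.update x 2 1) (Pi.single 2 1) (by simp),
      dSpp (Function.update x 2 1) (Pi.single 2 1) (by simp),
      dPpp (Function.update x 2 1) x (by simp),
      dQpp (Function.update x 2 1) x (by simp)] at m1
    rw [show Function.update x 2 1 0 = x 0 by simp,
      show Function.update x 2 1 2 = (1:ℝ) by simp] at m1
    rw [one_mul] at m1
    linear_combination -m1
  have hq2 : ∀ x, pd 0 (pd 0 Q) x
      = pd 0 (pd 0 Q) 0 + (pd 2 (pd 2 S) (Pi.single 2 1) - pd 2 (pd 2 S) 0) * x 0 := by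
    intro x
    have k1 := key x
    have k0 := key 0
    simp only [Pi.zero_apply, zero_mul, add_zero] at k0
    linear_combination k1 - k0 - hp2 x
  have hr2 : ∀ x, pd 2 (pd 2 R) x
      = pd 0 (pd 0 P) 0 + pd 0 (pd 0 Q) 0 * x 2 := by
    intro x
    have m1 := M (Function.update x 0 0)
    rw [dRpp (Function.update x 0 0) x (by simp),
      dPpp (Function.update x 0 0) 0 (by simp),
      dQpp (Function.update x 0 0) 0 (by simp)] at m1
    rw [show Function.update x 0 0 0 = (0:ℝ) by simp,
      show Function.update x 0 0 2 = x 2 by simp] at m1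
    rw [zero_mul, add_zero] at m1
    linear_combination m1
  have hs2 : ∀ x, pd 2 (pd 2 S) x
      = pd 2 (pd 2 S) 0 + (pd 2 (pd 2 S) (Pi.single 2 1) - pd 2 (pd 2 S) 0) * x 2 := by
    intro x
    have m1 := M (Function.update x 0 1)
    rw [dRpp (Function.update x 0 1) x (by simp),
      dSpp (Function.update x 0 1) x (by simp)] at m1
    rw [show Function.update x 0 1 0 = (1:ℝ) by simp,
      show Function.update x 0 1 2 = x 2 by simp] at m1
    rw [hp2 (Function.update x 0 1), hq2 (Function.update x 0 1)] at m1
    rw [show Function.update x 0 1 0 = (1:ℝ) by simp] at m1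
    rw [hr2 x] at m1
    linear_combination m1
  -- cubic expansions
  have hPx : ∀ x, P x = P 0 + x 0 * pd 0 P 0
      + pd 0 (pd 0 P) 0 * x 0 ^ 2 / 2 + pd 2 (pd 2 S) 0 * x 0 ^ 3 / 6 := by
    intro x
    have h := pd_cubic_struct sP 0 (pd 0 (pd 0 P) 0) (pd 2 (pd 2 S) 0) (fun z => hp2 z) x
    rw [dP (kil 0 x) 0 (by simp [kil]), depOn_pd dPd dP (kil 0 x) 0 (by simp [kil])] at h
    exact h
  have hQx : ∀ x, Q x = Q 0 + x 0 * pd 0 Q 0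
      + pd 0 (pd 0 Q) 0 * x 0 ^ 2 / 2
      + (pd 2 (pd 2 S) (Pi.single 2 1) - pd 2 (pd 2 S) 0) * x 0 ^ 3 / 6 := by
    intro x
    have h := pd_cubic_struct sQ 0 (pd 0 (pd 0 Q) 0)
      (pd 2 (pd 2 S) (Pi.single 2 1) - pd 2 (pd 2 S) 0) (fun z => hq2 z) x
    rw [dQ (kil 0 x) 0 (by simp [kil]), depOn_pd dQd dQ (kil 0 x) 0 (by simp [kil])] at h
    exact h
  have hRx : ∀ x, R x = R 0 + x 2 * pd 2 R 0
      + pd 0 (pd 0 P) 0 * x 2 ^ 2 / 2 + pd 0 (pd 0 Q) 0 * x 2 ^ 3 / 6 := by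
    intro x
    have h := pd_cubic_struct sR 2 (pd 0 (pd 0 P) 0) (pd 0 (pd 0 Q) 0) (fun z => hr2 z) x
    rw [dR (kil 2 x) 0 (by simp [kil]), depOn_pd dRd dR (kil 2 x) 0 (by simp [kil])] at h
    exact h
  have hSx : ∀ x, S x = S 0 + x 2 * pd 2 S 0
      + pd 2 (pd 2 S) 0 * x 2 ^ 2 / 2
      + (pd 2 (pd 2 S) (Pi.single 2 1) - pd 2 (pd 2 S) 0) * x 2 ^ 3 / 6 := by
    intro x
    have h := pd_cubic_struct sS 2 (pd 2 (pd 2 S) 0)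
      (pd 2 (pd 2 S) (Pi.single 2 1) - pd 2 (pd 2 S) 0) (fun z => hs2 z) x
    rw [dS (kil 2 x) 0 (by simp [kil]), depOn_pd dSd dS (kil 2 x) 0 (by simp [kil])] at h
    exact h
  -- final assembly
  refine ⟨![P 0, pd 0 P 0, Q 0, pd 0 Q 0, R 0, pd 2 R 0, S 0, pd 2 S 0,
    pd 0 (pd 0 P) 0 / 2, pd 2 (pd 2 S) 0 / 6, pd 0 (pd 0 Q) 0 / 6,
    (pd 2 (pd 2 S) (Pi.single 2 1) - pd 2 (pd 2 S) 0) / 6], funext fun x => ?_⟩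
  rw [sum_univ_twelve]
  simp only [v12_0, v12_1, v12_2, v12_3, v12_4, v12_5, v12_6, v12_7, v12_8, v12_9,
    v12_10, v12_11, bvE0, bvE1, bvE2, bvE3, bvE4, bvE5, bvE6, bvE7, bvE8, bvE9,
    bvE10, bvE11]
  rw [hyFG x, hFPQ x, hGRS x, hPx x, hQx x, hRx x, hSx x]
  ring


/-- The real vector space of smooth solutions of the system
`∂₃∂₃y = x₂·∂₁∂₁y`, `∂₂∂₂y = 0` is finite-dimensional of dimension `12`:
there are `12` linearly independent solutions spanning the solution set. -/
theorem solution_space_dim_twelve :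
    ∃ b : Fin 12 → ((Fin 3 → ℝ) → ℝ),
      (∀ i, IsSol (b i)) ∧
      LinearIndependent ℝ b ∧
      ∀ y, IsSol y → ∃ c : Fin 12 → ℝ, y = fun x => ∑ i, c i * b i x := by
  refine ⟨bv, ?_, bv_lin_indep, fun y hy => span_sol hy⟩
  intro i
  fin_cases i
  exacts [sol0, sol1, sol2, sol3, sol4, sol5, sol6, sol7, sol8, sol9, sol10, sol11]
end

section
/- Let ω = (ω₁, ω₂, ω₃) be smooth functions on ℝ³ such that ω₁(∂₂ω₃ − ∂₃ω₂) + ω₂(∂₃ω₁ − ∂₁ω₃) + ω₃(∂₁ω₂ − ∂₂ω₁) is equal to a constant c. Let λ : ℝ³ → ℝ be smooth and define μ¹ := ω₃∂₂λ − ω₂∂₃λ + 2(∂₂ω₃ − ∂₃ω₂)λ, μ² := ω₁∂₃λ − ω₃∂₁λ + 2(∂₃ω₁ − ∂₁ω₃)λ, μ³ := ω₂∂₁λ − ω₁∂₂λ + 2(∂₁ω₂ − ∂₂ω₁)λ. Then for each j ∈ {1,2,3}, ν^j := −Σᵢ ∂ᵢ(ω_j·μⁱ) + (1/2)·∂_j(Σᵢ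 ωᵢμⁱ) + Σᵢ (∂_jωᵢ)·μⁱ vanishes identically; that is, ad(D) ∘ ad(D₁) = 0. -/
/- Coordinates on `ℝ³` are indexed by `Fin 3`, so `∂₁ = pd 0`, `∂₂ = pd 1`,
`∂₃ = pd 2` and `ω₁ = ω 0`, `ω₂ = ω 1`, `ω₃ = ω 2`. -/

@[fun_prop]
theorem pd_contDiff {n : ℕ} (i : Fin n) {f : (Fin n → ℝ) → ℝ} (hf : ContDiff ℝ (⊤ : ℕ∞) f) :
    ContDiff ℝ (⊤ : ℕ∞) (pd i f) := by
  have h : ContDiff ℝ (⊤ : ℕ∞) (fderiv ℝ f) := hf.fderiv_right (by exact_mod_cast le_top)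
  exact (ContinuousLinearMap.apply ℝ ℝ (Pi.single i 1)).contDiff.comp h

@[fun_prop]
theorem pd_diff {n : ℕ} (i : Fin n) {f : (Fin n → ℝ) → ℝ} (hf : ContDiff ℝ (⊤ : ℕ∞) f) :
    Differentiable ℝ (pd i f) := (pd_contDiff i hf).differentiable (by simp)

theorem pd_addE {n : ℕ} (i : Fin n) {f g : (Fin n → ℝ) → ℝ} {x}
    (hf : DifferentiableAt ℝ f x) (hg : DifferentiableAt ℝ g x) :
    pd i (fun y => f y + g y) x = pd i f x + pd i g x := by
  simp [pd, fderiv_fun_add hf hg]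

theorem pd_subE {n : ℕ} (i : Fin n) {f g : (Fin n → ℝ) → ℝ} {x}
    (hf : DifferentiableAt ℝ f x) (hg : DifferentiableAt ℝ g x) :
    pd i (fun y => f y - g y) x = pd i f x - pd i g x := by
  simp [pd, fderiv_fun_sub hf hg]

theorem pd_mulE {n : ℕ} (i : Fin n) {f g : (Fin n → ℝ) → ℝ} {x}
    (hf : DifferentiableAt ℝ f x) (hg : DifferentiableAt ℝ g x) :
    pd i (fun y => f y * g y) x = pd i f x * g x + f x * pd i g x := by
  simp [pd, fderiv_fun_mul hf hg]; ring

theorem pd_constE {n : ℕ} (i : Fin n) (c : ℝ) {x} :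
    pd i (fun _ => c) x = 0 := by
  simp [pd]

theorem pd_cmulE {n : ℕ} (i : Fin n) (c : ℝ) {f : (Fin n → ℝ) → ℝ} {x}
    (hf : DifferentiableAt ℝ f x) :
    pd i (fun y => c * f y) x = c * pd i f x := by
  simp [pd, fderiv_const_mul hf c]

theorem pd_comm_s11 {n : ℕ} (a b : Fin n) {f : (Fin n → ℝ) → ℝ}
    (hf : ContDiff ℝ (⊤ : ℕ∞) f) (x : Fin n → ℝ) :
    pd a (pd b f) x = pd b (pd a f) x := by
  have hd' : ContDiff ℝ (⊤ : ℕ∞) (fderiv ℝ f) := hf.fderiv_right (by exact_mod_cast le_top)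
  have hd : DifferentiableAt ℝ (fderiv ℝ f) x :=
    (hd'.differentiable (by simp)).differentiableAt
  have key : ∀ v w : Fin n → ℝ,
      fderiv ℝ (fun y => fderiv ℝ f y v) x w = fderiv ℝ (fderiv ℝ f) x w v := by
    intro v w
    rw [fderiv_clm_apply hd (differentiableAt_const v)]
    simp
  have hsym := ((hf.contDiffAt (x := x)).isSymmSndFDerivAt
    (by rw [minSmoothness_of_isRCLikeNormedField]; exact WithTop.coe_le_coe.mpr (le_top : (2 : ℕ∞) ≤ ⊤))).eq (Pi.single a 1) (Pi.single b 1)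
  show fderiv ℝ (fun y => fderiv ℝ f y (Pi.single b 1)) x (Pi.single a 1)
    = fderiv ℝ (fun y => fderiv ℝ f y (Pi.single a 1)) x (Pi.single b 1)
  rw [key, key]
  exact hsym

set_option maxHeartbeats 2000000 in
/-- `ad(D) ∘ ad(D₁) = 0`: if `ω · curl ω` is a constant `c` and
`μⁱ` are obtained from `λ` by the formal adjoint `ad(D₁)` (cyclically,
`μⁱ = ω_{i+2}∂_{i+1}λ − ω_{i+1}∂_{i+2}λ + 2(∂_{i+1}ω_{i+2} − ∂_{i+2}ω_{i+1})λ`),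
then for every `j` the expression
`ν^j = −Σᵢ ∂ᵢ(ω_j μⁱ) + (1/2)∂_j(Σᵢ ωᵢμⁱ) + Σᵢ (∂_jωᵢ)μⁱ` vanishes. -/
theorem adD_comp_adD1_eq_zero (ω : Fin 3 → (Fin 3 → ℝ) → ℝ)
    (hω : ∀ i, ContDiff ℝ (⊤ : ℕ∞) (ω i))
    (lam : (Fin 3 → ℝ) → ℝ) (hlam : ContDiff ℝ (⊤ : ℕ∞) lam)
    (c : ℝ)
    (hc : ∀ x, ω 0 x * (pd 1 (ω 2) x - pd 2 (ω 1) x)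
      + ω 1 x * (pd 2 (ω 0) x - pd 0 (ω 2) x)
      + ω 2 x * (pd 0 (ω 1) x - pd 1 (ω 0) x) = c)
    (μ : Fin 3 → (Fin 3 → ℝ) → ℝ)
    (hμ : ∀ i x, μ i x = ω (i + 2) x * pd (i + 1) lam x - ω (i + 1) x * pd (i + 2) lam x
      + 2 * (pd (i + 1) (ω (i + 2)) x - pd (i + 2) (ω (i + 1)) x) * lam x) :
    ∀ j x, -(∑ i, pd i (fun y => ω j y * μ i y) x)
      + (1 / 2) * pd j (fun y => ∑ i, ω i y * μ i y) x
      + (∑ i, pd j (ω i) x * μ i x) = 0 := by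
  have hμf : μ = fun i x => ω (i + 2) x * pd (i + 1) lam x - ω (i + 1) x * pd (i + 2) lam x
      + 2 * (pd (i + 1) (ω (i + 2)) x - pd (i + 2) (ω (i + 1)) x) * lam x := by
    funext i x; exact hμ i x
  subst hμf
  have hω0 := hω 0
  have hω1 := hω 1
  have hω2 := hω 2
  have hd0 := hω0.differentiable (by simp)
  have hd1 := hω1.differentiable (by simp)
  have hd2 := hω2.differentiable (by simp)
  have hdl := hlam.differentiable (by simp)
  have hC : ∀ (j : Fin 3) x, pd j (fun y => ω 0 y * (pd 1 (ω 2) y - pd 2 (ω 1) y)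
      + ω 1 y * (pd 2 (ω 0) y - pd 0 (ω 2) y)
      + ω 2 y * (pd 0 (ω 1) y - pd 1 (ω 0) y)) x = 0 := by
    intro j x
    have : (fun y => ω 0 y * (pd 1 (ω 2) y - pd 2 (ω 1) y)
      + ω 1 y * (pd 2 (ω 0) y - pd 0 (ω 2) y)
      + ω 2 y * (pd 0 (ω 1) y - pd 1 (ω 0) y)) = fun _ => c := funext hc
    rw [this]
    simp [pd]
  intro j x
  have hc' := hC j x
  fin_cases j <;>
  · simp only [Fin.zero_eta, Fin.mk_one, Fin.reduceFinMk, Fin.sum_univ_three,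
      show (0 + 1 : Fin 3) = 1 from rfl, show (0 + 2 : Fin 3) = 2 from rfl,
      show (1 + 1 : Fin 3) = 2 from rfl, show (1 + 2 : Fin 3) = 0 from rfl,
      show (2 + 1 : Fin 3) = 0 from rfl, show (2 + 2 : Fin 3) = 1 from rfl] at hc' ⊢
    simp (disch := fun_prop) only [pd_mulE, pd_addE, pd_subE, pd_cmulE, pd_constE] at hc' ⊢
    simp only [pd_comm_s11 1 0 hlam x, pd_comm_s11 2 0 hlam x, pd_comm_s11 2 1 hlam x,
      pd_comm_s11 1 0 hω0 x, pd_comm_s11 2 0 hω0 x, pd_comm_s11 2 1 hω0 x,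
      pd_comm_s11 1 0 hω1 x, pd_comm_s11 2 0 hω1 x, pd_comm_s11 2 1 hω1 x,
      pd_comm_s11 1 0 hω2 x, pd_comm_s11 2 0 hω2 x, pd_comm_s11 2 1 hω2 x] at hc' ⊢
    linear_combination lam x * hc'
end
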